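/- arXiv:1605.04448 — 3 statements merged into one kernel-verified Lean document; each statement's English description precedes it below -/
import Mathlib

section
/- Let A be a k-algebra, φ a central form on A, P a finitely generated projective A-module and W a finite-dimensional k-vector space. Then for every f ∈ End_A(P ⊗_k W), the Hattori–Stallings trace t^φ_{P⊗W}(f) equals t^φ_P applied to the partial trace of f over W. -/
/-
The Hattori–Stallings trace is cyclic: for `g : Q → P` and `h : P → Q` between finitely generated
projective modules, `t_P(g ∘ h) = t_Q(h ∘ g)`. On free modules this is the familiar
`Σᵢ Σₗ φ(hₗᵢ gᵢₗ) = Σₗ Σᵢ φ(gᵢₗ hₗᵢ)`, using that `φ` is central; the general case follows by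
writing `g ∘ h` as `(ι_P g π_Q)(ι_Q h π_P)`. Now a basis `(bᵢ)` of `W` writes the identity of
`P ⊗ W` as `Σᵢ uᵢ ∘ vᵢ` with `uᵢ p = p ⊗ bᵢ` and `vᵢ (p ⊗ w) = bᵢ*(w) p`, so
`t_{P⊗W}(f) = Σᵢ t_{P⊗W}((f uᵢ) vᵢ) = Σᵢ t_P(vᵢ f uᵢ) = t_P(Σᵢ vᵢ f uᵢ)`, and the last sum is the
partial trace.
-/

open TensorProduct

variable {k A : Type} [Field k] [Ring A] [Algebra k A]

/-- The Hattori–Stallings trace of `f : P → P` with respect to a central form `φ` and a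
chosen presentation of `P` as a direct summand of the free module `A ⊗ X = Fin n → A`
(via `π : Aⁿ → P` split by `ι`). -/
noncomputable def HSTrace (φ : A →ₗ[k] k) {P : Type} [AddCommGroup P] [Module A P]
    {n : ℕ} (π : (Fin n → A) →ₗ[A] P) (ι : P →ₗ[A] (Fin n → A))
    (f : P →ₗ[A] P) : k :=
  ∑ i : Fin n, φ (ι (f (π (Pi.single i 1))) i)

/-- The partial trace over `W` of an `A`-linear endomorphism `f` of `P ⊗_k W`,
computed with respect to a finite basis `b` of `W`:
`p ↦ Σ_i (id_P ⊗ b.coord i)(f (p ⊗ b i))`; this is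
`(id_P ⊗ ev_W) ∘ (f ⊗ id_{W*}) ∘ (id_P ⊗ coev_W)`. -/
noncomputable def partialTrace {P W : Type}
    [AddCommGroup P] [Module k P] [Module A P] [IsScalarTower k A P] [SMulCommClass k A P]
    [AddCommGroup W] [Module k W] {m : ℕ} (b : Module.Basis (Fin m) k W)
    (f : (P ⊗[k] W) →ₗ[A] (P ⊗[k] W)) : P →ₗ[A] P :=
  ∑ i : Fin m,
    (TensorProduct.AlgebraTensorModule.rid k A P).toLinearMap ∘ₗ
      TensorProduct.AlgebraTensorModule.map (LinearMap.id (R := A) (M := P)) (b.coord i) ∘ₗ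
        f ∘ₗ
          TensorProduct.AlgebraTensorModule.map (LinearMap.id (R := A) (M := P))
            (LinearMap.toSpanSingleton k W (b i)) ∘ₗ
            (TensorProduct.AlgebraTensorModule.rid k A P).symm.toLinearMap

section HSTrace

variable {P Q : Type} [AddCommGroup P] [Module A P] [AddCommGroup Q] [Module A Q]

lemma HSTrace_eq_HSTrace_id_id (φ : A →ₗ[k] k) {n : ℕ} (π : (Fin n → A) →ₗ[A] P)
    (ι : P →ₗ[A] (Fin n → A)) (f : P →ₗ[A] P) :
    HSTrace φ π ι f = HSTrace φ LinearMap.id LinearMap.id (ι ∘ₗ f ∘ₗ π) :=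
  rfl

lemma HSTrace_sum (φ : A →ₗ[k] k) {n : ℕ} (π : (Fin n → A) →ₗ[A] P)
    (ι : P →ₗ[A] (Fin n → A)) {J : Type*} [Fintype J] (f : J → P →ₗ[A] P) :
    HSTrace φ π ι (∑ j, f j) = ∑ j, HSTrace φ π ι (f j) := by
  simp only [HSTrace, LinearMap.sum_apply, map_sum, Finset.sum_apply]
  exact Finset.sum_comm

lemma LinearMap.apply_eq_sum_mul_apply_single {p q : ℕ} (g : (Fin p → A) →ₗ[A] (Fin q → A))
    (x : Fin p → A) (i : Fin q) :
    g x i = ∑ l, x l * g (Pi.single l 1) i := by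
  have single_eq (l : Fin p) : (Pi.single l 1 : Fin p → A) = fun j => if l = j then 1 else 0 := by
    ext j; simp [Pi.single_apply, eq_comm]
  simp only [LinearMap.pi_apply_eq_sum_univ g x, Finset.sum_apply, Pi.smul_apply, smul_eq_mul,
    single_eq]

lemma HSTrace_id_id_comp_comm (φ : A →ₗ[k] k) (hφ : ∀ a b : A, φ (a * b) = φ (b * a))
    {n N : ℕ} (g : (Fin N → A) →ₗ[A] (Fin n → A)) (h : (Fin n → A) →ₗ[A] (Fin N → A)) :
    HSTrace φ LinearMap.id LinearMap.id (g ∘ₗ h) =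
      HSTrace φ LinearMap.id LinearMap.id (h ∘ₗ g) := by
  simp only [HSTrace, LinearMap.id_apply, LinearMap.comp_apply,
    LinearMap.apply_eq_sum_mul_apply_single g (h _), LinearMap.apply_eq_sum_mul_apply_single h (g _),
    map_sum]
  rw [Finset.sum_comm]
  exact Finset.sum_congr rfl fun l _ => Finset.sum_congr rfl fun i _ => hφ _ _

theorem HSTrace_comp_comm (φ : A →ₗ[k] k) (hφ : ∀ a b : A, φ (a * b) = φ (b * a)) {n N : ℕ}
    {πP : (Fin n → A) →ₗ[A] P} {ιP : P →ₗ[A] (Fin n → A)} (hP : πP ∘ₗ ιP = LinearMap.id)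
    {πQ : (Fin N → A) →ₗ[A] Q} {ιQ : Q →ₗ[A] (Fin N → A)} (hQ : πQ ∘ₗ ιQ = LinearMap.id)
    (g : Q →ₗ[A] P) (h : P →ₗ[A] Q) :
    HSTrace φ πP ιP (g ∘ₗ h) = HSTrace φ πQ ιQ (h ∘ₗ g) := by
  have hP' (x : P) : πP (ιP x) = x := LinearMap.congr_fun hP x
  have hQ' (y : Q) : πQ (ιQ y) = y := LinearMap.congr_fun hQ y
  calc HSTrace φ πP ιP (g ∘ₗ h)
      = HSTrace φ LinearMap.id LinearMap.id ((ιP ∘ₗ g ∘ₗ πQ) ∘ₗ (ιQ ∘ₗ h ∘ₗ πP)) := by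
        rw [HSTrace_eq_HSTrace_id_id φ πP]; congr 1; ext; simp [hQ']
    _ = HSTrace φ LinearMap.id LinearMap.id ((ιQ ∘ₗ h ∘ₗ πP) ∘ₗ (ιP ∘ₗ g ∘ₗ πQ)) :=
        HSTrace_id_id_comp_comm φ hφ _ _
    _ = HSTrace φ πQ ιQ (h ∘ₗ g) := by
        rw [HSTrace_eq_HSTrace_id_id φ πQ]; congr 1; ext; simp [hP']

end HSTrace

section PartialTrace

variable {P W : Type} [AddCommGroup P] [Module k P] [Module A P] [IsScalarTower k A P]
  [SMulCommClass k A P] [AddCommGroup W] [Module k W] {m : ℕ}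

noncomputable def tensorBasisIncl (b : Module.Basis (Fin m) k W) (i : Fin m) :
    P →ₗ[A] P ⊗[k] W :=
  AlgebraTensorModule.map LinearMap.id (LinearMap.toSpanSingleton k W (b i)) ∘ₗ
    (AlgebraTensorModule.rid k A P).symm.toLinearMap

noncomputable def tensorBasisProj (b : Module.Basis (Fin m) k W) (i : Fin m) :
    P ⊗[k] W →ₗ[A] P :=
  (AlgebraTensorModule.rid k A P).toLinearMap ∘ₗ AlgebraTensorModule.map LinearMap.id (b.coord i)

lemma sum_tensorBasisIncl_tensorBasisProj (b : Module.Basis (Fin m) k W) (x : P ⊗[k] W) :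
    ∑ i, tensorBasisIncl (A := A) b i (tensorBasisProj (A := A) b i x) = x := by
  induction x using TensorProduct.induction_on with
  | zero => simp
  | tmul p w =>
    simp only [tensorBasisIncl, tensorBasisProj, LinearMap.comp_apply, LinearEquiv.coe_coe,
      AlgebraTensorModule.map_tmul, AlgebraTensorModule.rid_tmul,
      AlgebraTensorModule.rid_symm_apply, LinearMap.id_apply, LinearMap.toSpanSingleton_apply,
      Module.Basis.coord_apply, TensorProduct.smul_tmul, ← TensorProduct.tmul_sum, smul_eq_mul,
      mul_one, b.sum_repr]
  | add x y hx hy => simp only [map_add, Finset.sum_add_distrib, hx, hy]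

lemma partialTrace_eq_sum (b : Module.Basis (Fin m) k W) (f : P ⊗[k] W →ₗ[A] P ⊗[k] W) :
    partialTrace b f = ∑ i, tensorBasisProj b i ∘ₗ f ∘ₗ tensorBasisIncl b i :=
  rfl

end PartialTrace

theorem HSTrace_tensor_eq_HSTrace_partialTrace_general
    (φ : A →ₗ[k] k) (hφ : ∀ a b : A, φ (a * b) = φ (b * a))
    {P W : Type}
    [AddCommGroup P] [Module k P] [Module A P] [IsScalarTower k A P] [SMulCommClass k A P]
    [AddCommGroup W] [Module k W]
    {m : ℕ} (b : Module.Basis (Fin m) k W)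
    {n N : ℕ}
    (πP : (Fin n → A) →ₗ[A] P) (ιP : P →ₗ[A] (Fin n → A)) (hP : πP ∘ₗ ιP = LinearMap.id)
    (πT : (Fin N → A) →ₗ[A] (P ⊗[k] W)) (ιT : (P ⊗[k] W) →ₗ[A] (Fin N → A))
    (hT : πT ∘ₗ ιT = LinearMap.id)
    (f : (P ⊗[k] W) →ₗ[A] (P ⊗[k] W)) :
    HSTrace φ πT ιT f = HSTrace φ πP ιP (partialTrace b f) := by
  calc HSTrace φ πT ιT f
      = HSTrace φ πT ιT (∑ i, (f ∘ₗ tensorBasisIncl b i) ∘ₗ tensorBasisProj b i) := by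
        congr 1
        refine LinearMap.ext fun x => ?_
        simp only [LinearMap.sum_apply, LinearMap.comp_apply, ← map_sum,
          sum_tensorBasisIncl_tensorBasisProj]
    _ = ∑ i, HSTrace φ πP ιP (tensorBasisProj b i ∘ₗ f ∘ₗ tensorBasisIncl b i) := by
        rw [HSTrace_sum]
        exact Finset.sum_congr rfl fun i _ => HSTrace_comp_comm φ hφ hT hP _ _
    _ = HSTrace φ πP ιP (partialTrace b f) := by
        rw [partialTrace_eq_sum, HSTrace_sum]

/-- for a central form `φ`, a finitely generated projective `A`-module `P`
and a finite-dimensional `k`-vector space `W`, the Hattori–Stallings trace of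
`f ∈ End_A(P ⊗_k W)` equals the Hattori–Stallings trace of the partial trace of `f`
over `W`. -/
theorem HSTrace_tensor_eq_HSTrace_partialTrace
    (φ : A →ₗ[k] k) (hφ : ∀ a b : A, φ (a * b) = φ (b * a))
    {P W : Type}
    [AddCommGroup P] [Module k P] [Module A P] [IsScalarTower k A P] [SMulCommClass k A P]
    [AddCommGroup W] [Module k W] [FiniteDimensional k W]
    {m : ℕ} (b : Module.Basis (Fin m) k W)
    {n N : ℕ}
    (πP : (Fin n → A) →ₗ[A] P) (ιP : P →ₗ[A] (Fin n → A)) (hP : πP ∘ₗ ιP = LinearMap.id)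
    (πT : (Fin N → A) →ₗ[A] (P ⊗[k] W)) (ιT : (P ⊗[k] W) →ₗ[A] (Fin N → A))
    (hT : πT ∘ₗ ιT = LinearMap.id)
    (f : (P ⊗[k] W) →ₗ[A] (P ⊗[k] W)) :
    HSTrace φ πT ιT f = HSTrace φ πP ιP (partialTrace b f) :=
  HSTrace_tensor_eq_HSTrace_partialTrace_general φ hφ b πP ιP hP πT ιT hT f
end

section
/- Let Λ(h) be the exterior algebra of a 2N-dimensional symplectic vector space h over ℂ, regarded as a superalgebra, and let E₀ = Λ(h) ⋊ ℂℤ₂ be the smash product where the generator κ of ℤ₂ acts by the parity involution. Then the center of E₀ equals Λ(h)_even ⊕ ℂ·(α¹⋯α^{2N} κ), where Λ(h)_even is the even part of Λ(h) and α¹,…,α^{2N} is a basis of h. -/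
open Function

/-- The symplectic vector space `h = ℂ^{2N}` with basis `α¹,…,α^{2N}`. -/
abbrev hsp (N : ℕ) := Fin (2 * N) → ℂ

/-- The exterior algebra `Λ(h)`. -/
abbrev Lam (N : ℕ) := ExteriorAlgebra ℂ (hsp N)

/-- The parity involution `ω` of `Λ(h)` (the algebra map induced by `v ↦ −v`). -/
noncomputable def parity (N : ℕ) : Lam N →ₐ[ℂ] Lam N :=
  ExteriorAlgebra.lift ℂ ⟨-(ExteriorAlgebra.ι ℂ), by intro m; simp⟩

/-- The top exterior product `α¹ ⋯ α^{2N} ∈ Λ(h)`. -/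
noncomputable def topEl (N : ℕ) : Lam N :=
  ((List.finRange (2 * N)).map
    (fun i => ExteriorAlgebra.ι ℂ (Pi.single i 1 : hsp N))).prod

/-! Write `x = a + b κ`. Commuting with `κ` forces `a` and `b` to be even; commuting with `Λ(h)`
then asks that `a` be central, which is automatic for even elements, and that `ℓ b = b ω(ℓ)`.
For a generator `v ∈ h` the even element `b` both commutes and anticommutes with `v`, so
`b v = 0`; and the right annihilator of `h` in `Λ(h)` is the top degree `ℂ · α¹ ⋯ α^{2N}`,
found by peeling off one basis vector at a time with the contraction `⌊ αⁱ*`. -/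

namespace ExteriorAlgebra

open CliffordAlgebra

variable {R M : Type*} [CommRing R] [AddCommGroup M] [Module R M]

theorem ι_mul_eq_involute_mul_ι (m : M) (x : ExteriorAlgebra R M) :
    ι R m * x = involute x * ι R m := by
  induction x using ExteriorAlgebra.induction with
  | algebraMap r => rw [AlgHom.commutes]; exact (Algebra.commutes r _).symm
  | ι w => rw [involute_ι, neg_mul, eq_neg_iff_add_eq_zero, ι_add_mul_swap]
  | mul x y hx hy => rw [← mul_assoc, hx, mul_assoc, hy, ← mul_assoc, map_mul]
  | add x y hx hy => rw [mul_add, hx, hy, map_add, add_mul]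

theorem mul_ι_eq_ι_mul_involute (m : M) (x : ExteriorAlgebra R M) :
    x * ι R m = ι R m * involute x := by
  rw [ι_mul_eq_involute_mul_ι, involute_involute]

theorem commute_of_involute_eq {x : ExteriorAlgebra R M} (hx : involute x = x)
    (y : ExteriorAlgebra R M) : Commute x y := by
  induction y using ExteriorAlgebra.induction with
  | algebraMap r => exact (Algebra.commutes r x).symm
  | ι w => rw [Commute, SemiconjBy, mul_ι_eq_ι_mul_involute, hx]
  | mul y z hy hz => exact hy.mul_right hz
  | add y z hy hz => exact hy.add_right hz

theorem mul_map_eq_map_involute_mul {E : Type*} [Ring E] [Algebra R E]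
    (j : ExteriorAlgebra R M →ₐ[R] E) {κ : E}
    (h : ∀ m, κ * j (ι R m) = -(j (ι R m) * κ)) (x : ExteriorAlgebra R M) :
    κ * j x = j (involute x) * κ := by
  induction x using ExteriorAlgebra.induction with
  | algebraMap r => simp only [AlgHom.commutes]; exact (Algebra.commutes r κ).symm
  | ι w => rw [h, involute_ι, map_neg, neg_mul]
  | mul x y hx hy => rw [map_mul, ← mul_assoc, hx, mul_assoc, hy, ← mul_assoc, map_mul, map_mul]
  | add x y hx hy => rw [map_add, mul_add, hx, hy, map_add, map_add, add_mul]

theorem involute_ιMulti {n : ℕ} (f : Fin n → M) :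
    involute (ιMulti R n f) = (-1 : R) ^ n • ιMulti R n f := by
  have := involute_prod_map_ι (Q := (0 : QuadraticForm R M)) (List.ofFn f)
  rwa [List.map_ofFn, List.length_ofFn] at this

theorem ιMulti_succ_eq_mul_ι {n : ℕ} (f : Fin (n + 1) → M) :
    ιMulti R (n + 1) f = ιMulti R n (fun i => f i.castSucc) * ι R (f (Fin.last n)) := by
  simp only [ιMulti_apply, List.ofFn_succ', List.concat_eq_append, List.prod_append,
    List.prod_singleton]

theorem ι_mul_ιMulti_of_mem_span {n : ℕ} (f : Fin n → M) {m : M}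
    (hm : m ∈ Submodule.span R (Set.range f)) : ι R m * ιMulti R n f = 0 := by
  induction hm using Submodule.span_induction with
  | mem _ h =>
    obtain ⟨i, rfl⟩ := h
    rw [ιMulti_apply]
    exact ι_mul_prod_list f i
  | zero => rw [map_zero, zero_mul]
  | add _ _ _ _ h₁ h₂ => rw [map_add, add_mul, h₁, h₂, add_zero]
  | smul r _ _ h => rw [map_smul, smul_mul_assoc, h, smul_zero]

theorem ιMulti_mul_ι_of_mem_span {n : ℕ} (f : Fin n → M) {m : M}
    (hm : m ∈ Submodule.span R (Set.range f)) : ιMulti R n f * ι R m = 0 := by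
  rw [mul_ι_eq_ι_mul_involute, involute_ιMulti, mul_smul_comm, ι_mul_ιMulti_of_mem_span f hm,
    smul_zero]

theorem mul_eq_algebraMapInv_smul {t : ExteriorAlgebra R M} (ht : ∀ m, ι R m * t = 0)
    (x : ExteriorAlgebra R M) : x * t = algebraMapInv x • t := by
  induction x using ExteriorAlgebra.induction with
  | algebraMap r => rw [← Algebra.smul_def, algebraMap_leftInverse]
  | ι w => rw [ht, algebraMapInv, lift_ι_apply, LinearMap.zero_apply, zero_smul]
  | mul x y hx hy => rw [mul_assoc, hy, mul_smul_comm, hx, smul_smul, map_mul, mul_comm]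
  | add x y hx hy => rw [add_mul, hx, hy, map_add, add_smul]

theorem mul_eq_mul_involute_of_ι_mul_eq_zero {t : ExteriorAlgebra R M}
    (hl : ∀ m, ι R m * t = 0) (hr : ∀ m, t * ι R m = 0) (x : ExteriorAlgebra R M) :
    x * t = t * involute x := by
  induction x using ExteriorAlgebra.induction with
  | algebraMap r => rw [AlgHom.commutes]; exact Algebra.commutes r t
  | ι w => rw [hl, involute_ι, mul_neg, hr, neg_zero]
  | mul x y hx hy => rw [mul_assoc, hy, ← mul_assoc, hx, mul_assoc, map_mul]
  | add x y hx hy => rw [add_mul, hx, hy, map_add, mul_add]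

theorem exists_eq_mul_ιMulti_of_mul_ι_eq_zero {k : ℕ} (f : Fin k → M)
    (d : Fin k → Module.Dual R M) (hd : ∀ i j, d i (f j) = if i = j then 1 else 0)
    {x : ExteriorAlgebra R M} (hx : ∀ i, x * ι R (f i) = 0) : ∃ y, x = y * ιMulti R k f := by
  induction k generalizing x with
  | zero => exact ⟨x, by rw [ιMulti_apply, List.ofFn_zero, List.prod_nil, mul_one]⟩
  | succ k ih =>
    set x₁ := contractRight x (d (Fin.last k))
    have hcontract (i : Fin (k + 1)) : d (Fin.last k) (f i) • x = x₁ * ι R (f i) := by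
      have := contractRight_mul_ι (d := d (Fin.last k)) (f i) x
      rwa [hx, map_zero, LinearMap.zero_apply, eq_comm, sub_eq_zero] at this
    have hx₁ (i : Fin k) : x₁ * ι R (f i.castSucc) = 0 := by
      rw [← hcontract, hd, if_neg (Fin.castSucc_lt_last i).ne', zero_smul]
    obtain ⟨y, hy⟩ := ih (fun i => f i.castSucc) (fun i => d i.castSucc)
      (fun i j => by simp only [hd, Fin.castSucc_inj]) hx₁
    refine ⟨y, ?_⟩
    rw [ιMulti_succ_eq_mul_ι, ← mul_assoc, ← hy, ← hcontract, hd, if_pos rfl, one_smul]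

theorem exists_eq_smul_ιMulti_of_mul_ι_eq_zero {n : ℕ} (b : Module.Basis (Fin n) R M)
    {x : ExteriorAlgebra R M} (hx : ∀ m, x * ι R m = 0) : ∃ c : R, x = c • ιMulti R n b := by
  obtain ⟨y, rfl⟩ := exists_eq_mul_ιMulti_of_mul_ι_eq_zero b b.coord
    (fun i j => by simp [Finsupp.single_apply, eq_comm]) (fun i => hx (b i))
  exact ⟨_, mul_eq_algebraMapInv_smul (fun m => ι_mul_ιMulti_of_mem_span b (b.mem_span m)) y⟩

theorem involute_eq_and_mul_eq_mul_involute_iff [Invertible (2 : R)] {n : ℕ} (hn : Even n)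
    (b : Module.Basis (Fin n) R M) (x : ExteriorAlgebra R M) :
    (involute x = x ∧ ∀ l, l * x = x * involute l) ↔ ∃ c : R, x = c • ιMulti R n b := by
  constructor
  · rintro ⟨hx, hxl⟩
    refine exists_eq_smul_ιMulti_of_mul_ι_eq_zero b fun m => ?_
    -- `ι m` commutes with the even element `x`, but `hxl` makes it anticommute.
    have h1 := hxl (ι R m)
    rw [involute_ι, mul_neg, ι_mul_eq_involute_mul_ι, hx] at h1
    have h2 : (2 : R) • (x * ι R m) = 0 := by
      rw [two_smul]
      nth_rewrite 1 [h1]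
      exact neg_add_cancel _
    rw [← one_smul R (x * ι R m), ← invOf_mul_self (2 : R), mul_smul, h2, smul_zero]
  · rintro ⟨c, rfl⟩
    have hl m := ι_mul_ιMulti_of_mem_span b (b.mem_span m)
    have hr m := ιMulti_mul_ι_of_mem_span b (b.mem_span m)
    refine ⟨by rw [map_smul, involute_ιMulti, hn.neg_one_pow, one_smul], fun l => ?_⟩
    rw [mul_smul_comm, smul_mul_assoc, mul_eq_mul_involute_of_ι_mul_eq_zero hl hr]

end ExteriorAlgebra

section SmashProduct

variable {A E F : Type*} [Semiring E] [FunLike F A E] {j : F} {σ : A → A} {κ : E}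

theorem eq_and_eq_of_add_mul_eq (hfree : ∀ x : E, ∃! p : A × A, x = j p.1 + j p.2 * κ)
    {a b a' b' : A} (h : j a + j b * κ = j a' + j b' * κ) : a = a' ∧ b = b' :=
  Prod.ext_iff.mp ((hfree _).unique (y₁ := (a, b)) (y₂ := (a', b')) rfl h)

theorem commute_add_mul_self_iff (hκ2 : κ * κ = 1) (hκj : ∀ a, κ * j a = j (σ a) * κ)
    (hfree : ∀ x : E, ∃! p : A × A, x = j p.1 + j p.2 * κ) (a b : A) :
    Commute (j a + j b * κ) κ ↔ σ a = a ∧ σ b = b := by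
  have hleft : (j a + j b * κ) * κ = j b + j a * κ := by
    rw [add_mul, mul_assoc, hκ2, mul_one, add_comm]
  have hright : κ * (j a + j b * κ) = j (σ b) + j (σ a) * κ := by
    rw [mul_add, ← mul_assoc, hκj, hκj, mul_assoc, hκ2, mul_one, add_comm]
  rw [Commute, SemiconjBy, hleft, hright]
  constructor
  · intro h
    exact (eq_and_eq_of_add_mul_eq hfree h).symm.imp Eq.symm Eq.symm
  · rintro ⟨ha, hb⟩
    rw [ha, hb]

variable [Mul A] [MulHomClass F A E]

theorem commute_add_mul_map_iff (hκj : ∀ a, κ * j a = j (σ a) * κ)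
    (hfree : ∀ x : E, ∃! p : A × A, x = j p.1 + j p.2 * κ) (a b l : A) :
    Commute (j a + j b * κ) (j l) ↔ Commute a l ∧ l * b = b * σ l := by
  have hleft : (j a + j b * κ) * j l = j (a * l) + j (b * σ l) * κ := by
    rw [add_mul, mul_assoc, hκj, ← mul_assoc, map_mul, map_mul]
  have hright : j l * (j a + j b * κ) = j (l * a) + j (l * b) * κ := by
    rw [mul_add, ← mul_assoc, map_mul, map_mul]
  rw [Commute, SemiconjBy, hleft, hright]
  constructor
  · intro h
    exact (eq_and_eq_of_add_mul_eq hfree h).imp id Eq.symm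
  · rintro ⟨ha, hb⟩
    rw [ha.eq, hb]

theorem add_mul_mem_center_iff (hκ2 : κ * κ = 1) (hκj : ∀ a, κ * j a = j (σ a) * κ)
    (hfree : ∀ x : E, ∃! p : A × A, x = j p.1 + j p.2 * κ) (a b : A) :
    j a + j b * κ ∈ Subsemiring.center E ↔
      (σ a = a ∧ σ b = b) ∧ ∀ l, Commute a l ∧ l * b = b * σ l := by
  simp_rw [← commute_add_mul_self_iff hκ2 hκj hfree, ← commute_add_mul_map_iff hκj hfree,
    Subsemiring.mem_center_iff]
  constructor
  · intro h
    exact ⟨(h κ).symm, fun l => (h (j l)).symm⟩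
  · rintro ⟨hκ, hj⟩ y
    obtain ⟨⟨p, q⟩, rfl, -⟩ := hfree y
    exact ((hj p).add_right ((hj q).mul_right hκ)).symm

end SmashProduct

open ExteriorAlgebra CliffordAlgebra

theorem parity_eq_involute (N : ℕ) : parity N = involute :=
  ExteriorAlgebra.hom_ext <| LinearMap.ext fun v => by simp [parity]

theorem topEl_eq_ιMulti (N : ℕ) : topEl N = ιMulti ℂ (2 * N) (Pi.basisFun ℂ (Fin (2 * N))) := by
  rw [topEl, ιMulti_apply, List.ofFn_eq_map]
  simp

theorem center_of_smash_product_general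
    (N : ℕ)
    (E : Type) [Ring E] [Algebra ℂ E]
    (j : Lam N →ₐ[ℂ] E)
    (κ : E) (hκ2 : κ * κ = 1)
    (hκι : ∀ v : hsp N, κ * j (ExteriorAlgebra.ι ℂ v) = -(j (ExteriorAlgebra.ι ℂ v) * κ))
    (hfree : ∀ x : E, ∃! p : Lam N × Lam N, x = j p.1 + j p.2 * κ) :
    ∀ x : E, x ∈ Subalgebra.center ℂ E ↔
      ∃ (a : Lam N) (c : ℂ), parity N a = a ∧ x = j a + c • (j (topEl N) * κ) := by
  have hκj := mul_map_eq_map_involute_mul j hκι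
  have htop := involute_eq_and_mul_eq_mul_involute_iff (even_two_mul N)
    (Pi.basisFun ℂ (Fin (2 * N)))
  intro x
  obtain ⟨⟨a, b⟩, rfl, -⟩ := hfree x
  rw [Subalgebra.mem_center_iff, ← Subsemiring.mem_center_iff,
    add_mul_mem_center_iff hκ2 hκj hfree, parity_eq_involute, topEl_eq_ιMulti]
  constructor
  · rintro ⟨⟨ha, hb⟩, hl⟩
    obtain ⟨c, rfl⟩ := (htop b).mp ⟨hb, fun l => (hl l).2⟩
    exact ⟨a, c, ha, by rw [map_smul, smul_mul_assoc]⟩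
  · rintro ⟨a', c, ha', hx⟩
    rw [← smul_mul_assoc, ← map_smul] at hx
    obtain ⟨rfl, rfl⟩ := eq_and_eq_of_add_mul_eq hfree hx
    obtain ⟨hb, hbl⟩ := (htop _).mpr ⟨c, rfl⟩
    exact ⟨⟨ha', hb⟩, fun l => ⟨commute_of_involute_eq ha' l, hbl l⟩⟩

/-- the center of the smash product `E₀ = Λ(h) ⋊ ℂℤ₂` (presented
abstractly: `E₀` is generated over `Λ(h)` by an element `κ` with `κ² = 1` and
`κ·ι(v) = −ι(v)·κ`, and is free of rank 2 over `Λ(h)` with basis `1, κ`) equals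
`Λ(h)_even ⊕ ℂ·(α¹⋯α^{2N} κ)`, where `Λ(h)_even` is the fixed subspace of the parity
involution. -/
theorem center_of_smash_product
    (N : ℕ) (hN : 0 < N)
    (E : Type) [Ring E] [Algebra ℂ E]
    (j : Lam N →ₐ[ℂ] E) (hj : Injective j)
    (κ : E) (hκ2 : κ * κ = 1)
    (hκι : ∀ v : hsp N, κ * j (ExteriorAlgebra.ι ℂ v) = -(j (ExteriorAlgebra.ι ℂ v) * κ))
    (hfree : ∀ x : E, ∃! p : Lam N × Lam N, x = j p.1 + j p.2 * κ) :
    ∀ x : E, x ∈ Subalgebra.center ℂ E ↔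
      ∃ (a : Lam N) (c : ℂ), parity N a = a ∧ x = j a + c • (j (topEl N) * κ) :=
  center_of_smash_product_general N E j κ hκ2 hκι hfree
end

section
/- Let C be a braided finite tensor category with coend L, Hopf pairing ω : L ⊗ L → 1, and let Ω : C(1,L) → C(L,1) be defined by Ω(f) = ω ∘ (f ⊗ id_L). Then Ω is a homomorphism of k-algebras from the algebra of class functions (with product induced by the multiplication μ_L of L) to the algebra of central elements (with convolution product induced by the comultiplication Δ_L). -/
/-!
`pairLeft ω a = ω ∘ (a ⊗ id)` is the paper's `Ω a`. Feeding a product `μ ∘ (a ⊗ b)` into the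
first slot of `ω`, the Hopf pairing axiom replaces it by `ω ⊗ ω` after `Δ` on the second slot;
naturality of `tensorμ` and its unit coherence then identify the result with the convolution
`(Ω a ⊗ Ω b) ∘ Δ`. The unit axiom of `ω` gives `Ω η = ε`.
-/

open CategoryTheory MonoidalCategory

namespace CategoryTheory.MonoidalCategory

variable {C : Type*} [Category C] [MonoidalCategory C]

variable {X Y : C} (ω : X ⊗ Y ⟶ 𝟙_ C)

def pairLeft (a : 𝟙_ C ⟶ X) : Y ⟶ 𝟙_ C :=
  (λ_ Y).inv ≫ a ▷ Y ≫ ω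

theorem pairLeft_unit {η : 𝟙_ C ⟶ X} {ε : Y ⟶ 𝟙_ C} (hη : η ▷ Y ≫ ω = (λ_ Y).hom ≫ ε) :
    pairLeft ω η = ε := by
  rw [pairLeft, hη, Iso.inv_hom_id_assoc]

variable [BraidedCategory C]

theorem leftUnitor_inv_whiskerRight_tensorμ (Y₁ Y₂ : C) :
    (λ_ (Y₁ ⊗ Y₂)).inv ≫ (λ_ (𝟙_ C)).inv ▷ (Y₁ ⊗ Y₂) ≫ tensorμ (𝟙_ C) (𝟙_ C) Y₁ Y₂ =
      (λ_ Y₁).inv ⊗ₘ (λ_ Y₂).inv := by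
  rw [Iso.inv_comp_eq, tensor_left_unitality, Category.assoc, Category.assoc,
    tensorHom_comp_tensorHom, Iso.hom_inv_id, Iso.hom_inv_id, id_tensorHom_id, Category.comp_id]

theorem leftUnitor_inv_whiskerRight_tensorHom_tensorμ {X₁ X₂ : C} (a₁ : 𝟙_ C ⟶ X₁)
    (a₂ : 𝟙_ C ⟶ X₂) (Y₁ Y₂ : C) :
    (λ_ (Y₁ ⊗ Y₂)).inv ≫ ((λ_ (𝟙_ C)).inv ≫ (a₁ ⊗ₘ a₂)) ▷ (Y₁ ⊗ Y₂) ≫ tensorμ X₁ X₂ Y₁ Y₂ =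
      ((λ_ Y₁).inv ≫ a₁ ▷ Y₁) ⊗ₘ ((λ_ Y₂).inv ≫ a₂ ▷ Y₂) := by
  rw [comp_whiskerRight, Category.assoc, tensorμ_natural_left,
    reassoc_of% leftUnitor_inv_whiskerRight_tensorμ, tensorHom_comp_tensorHom]

theorem pairLeft_mul {μ : X ⊗ X ⟶ X} {Δ : Y ⟶ Y ⊗ Y}
    (hμ : μ ▷ Y ≫ ω = (X ⊗ X) ◁ Δ ≫ tensorμ X X Y Y ≫ (ω ⊗ₘ ω) ≫ (λ_ (𝟙_ C)).hom)
    (a b : 𝟙_ C ⟶ X) :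
    pairLeft ω ((λ_ (𝟙_ C)).inv ≫ (a ⊗ₘ b) ≫ μ) =
      Δ ≫ (pairLeft ω a ⊗ₘ pairLeft ω b) ≫ (λ_ (𝟙_ C)).hom :=
  calc pairLeft ω ((λ_ (𝟙_ C)).inv ≫ (a ⊗ₘ b) ≫ μ)
      _ = (λ_ Y).inv ≫ ((λ_ (𝟙_ C)).inv ≫ (a ⊗ₘ b)) ▷ Y ≫ μ ▷ Y ≫ ω := by
        simp only [pairLeft, ← Category.assoc, comp_whiskerRight]
      _ = Δ ≫ (λ_ (Y ⊗ Y)).inv ≫ ((λ_ (𝟙_ C)).inv ≫ (a ⊗ₘ b)) ▷ (Y ⊗ Y) ≫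
            tensorμ X X Y Y ≫ (ω ⊗ₘ ω) ≫ (λ_ (𝟙_ C)).hom := by
        rw [hμ, ← whisker_exchange_assoc, leftUnitor_inv_naturality_assoc]
      _ = Δ ≫ (pairLeft ω a ⊗ₘ pairLeft ω b) ≫ (λ_ (𝟙_ C)).hom := by
        rw [reassoc_of% leftUnitor_inv_whiskerRight_tensorHom_tensorμ,
          tensorHom_comp_tensorHom_assoc]
        simp only [pairLeft, Category.assoc]

end CategoryTheory.MonoidalCategory

theorem Omega_algebra_hom_general
    (C : Type) [Category C]
    [MonoidalCategory C] [BraidedCategory C]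
    (L : C) (μ : L ⊗ L ⟶ L) (Δ : L ⟶ L ⊗ L) (ηL : 𝟙_ C ⟶ L) (εL : L ⟶ 𝟙_ C)
    (ω : L ⊗ L ⟶ 𝟙_ C)
    -- `ω` is a Hopf pairing: it intertwines multiplication on one side with
    -- comultiplication on the other, and units with counits:
    (hω₁ : (μ ▷ L) ≫ ω =
      ((L ⊗ L) ◁ Δ) ≫ tensorμ L L L L ≫ (ω ⊗ₘ ω) ≫ (λ_ (𝟙_ C)).hom)
    (hωη : (ηL ▷ L) ≫ ω = (λ_ L).hom ≫ εL) :
    -- `Ω` preserves products and units: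
    (∀ a b : 𝟙_ C ⟶ L,
      ((λ_ L).inv ≫ ((((λ_ (𝟙_ C)).inv ≫ (a ⊗ₘ b) ≫ μ)) ▷ L) ≫ ω) =
        Δ ≫ (((λ_ L).inv ≫ (a ▷ L) ≫ ω) ⊗ₘ ((λ_ L).inv ≫ (b ▷ L) ≫ ω)) ≫
          (λ_ (𝟙_ C)).hom) ∧
    ((λ_ L).inv ≫ (ηL ▷ L) ≫ ω = εL) :=
  ⟨pairLeft_mul ω hω₁, pairLeft_unit ω hωη⟩

/-- for a braided finite tensor category `C` with coend Hopf algebra `L`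
(multiplication `μ`, comultiplication `Δ`, unit `ηL`, counit `εL`) and Hopf pairing
`ω : L ⊗ L ⟶ 𝟙`, the map `Ω : C(1,L) → C(L,1)`, `f ↦ (f ⊗ id) ≫ ω`, is a homomorphism
of `k`-algebras from class functions (product induced by `μ`) to central elements
(convolution product induced by `Δ`). -/
theorem Omega_algebra_hom
    (k : Type) [Field k]
    (C : Type) [Category C] [Preadditive C] [Linear k C] [Abelian C]
    [MonoidalCategory C] [BraidedCategory C] [RightRigidCategory C]
    (L : C) (μ : L ⊗ L ⟶ L) (Δ : L ⟶ L ⊗ L) (ηL : 𝟙_ C ⟶ L) (εL : L ⟶ 𝟙_ C)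
    (ω : L ⊗ L ⟶ 𝟙_ C)
    -- `ω` is a Hopf pairing: it intertwines multiplication on one side with
    -- comultiplication on the other, and units with counits:
    (hω₁ : (μ ▷ L) ≫ ω =
      ((L ⊗ L) ◁ Δ) ≫ tensorμ L L L L ≫ (ω ⊗ₘ ω) ≫ (λ_ (𝟙_ C)).hom)
    (hω₂ : (L ◁ μ) ≫ ω =
      (Δ ▷ (L ⊗ L)) ≫ tensorμ L L L L ≫ (ω ⊗ₘ ω) ≫ (λ_ (𝟙_ C)).hom)
    (hωη : (ηL ▷ L) ≫ ω = (λ_ L).hom ≫ εL)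
    (hωη' : (L ◁ ηL) ≫ ω = (ρ_ L).hom ≫ εL)
    -- the convolution algebra `C(L,1)` is commutative:
    (hcomm : ∀ f g : L ⟶ 𝟙_ C,
      Δ ≫ (f ⊗ₘ g) ≫ (λ_ (𝟙_ C)).hom = Δ ≫ (g ⊗ₘ f) ≫ (λ_ (𝟙_ C)).hom) :
    -- `Ω` preserves products and units:
    (∀ a b : 𝟙_ C ⟶ L,
      ((λ_ L).inv ≫ ((((λ_ (𝟙_ C)).inv ≫ (a ⊗ₘ b) ≫ μ)) ▷ L) ≫ ω) =
        Δ ≫ (((λ_ L).inv ≫ (a ▷ L) ≫ ω) ⊗ₘ ((λ_ L).inv ≫ (b ▷ L) ≫ ω)) ≫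
          (λ_ (𝟙_ C)).hom) ∧
    ((λ_ L).inv ≫ (ηL ▷ L) ≫ ω = εL) :=
  Omega_algebra_hom_general C L μ Δ ηL εL ω hω₁ hωη
end
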